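/- Let g₁, …, g_N be real numbers with ḡ_k := (g₁ + ⋯ + g_k)/k. In the symmetric-collision case (q_k^± = 1/2), the vector −R^{-1}μ, where R is the (N−1)×(N−1) tridiagonal matrix with 1 on the diagonal and −1/2 on the super- and sub-diagonals, and μ = (g₂−g₁, g₃−g₂, …, g_N−g_{N−1})ᵀ, equals 2(g₁ − ḡ_N, g₁+g₂ − 2ḡ_N, …, g₁+⋯+g_{N−1} − (N−1)ḡ_N)ᵀ. Consequently, −R^{-1}μ > 0 componentwise if and only if ḡ_k > ḡ_N for all k = 1, …, N−1. -/

import Mathlib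

open Finset Matrix

/-!
Put `W k = 2 (g₀ + ⋯ + g_{k-1} - k ḡ_N)`, so that `W 0 = W N = 0` and the claimed vector is
`v_i = W (i + 1)`. Applied to a vector of this shape with zero boundary values, `R` is minus
half the second difference, and the second difference of `W` is `2 (g_{i+1} - g_i)`; hence
`R v = -μ`. `R` is invertible because a sequence with vanishing second differences is linear,
so zero boundary values force it to vanish. Finally `0 < W k ↔ ḡ_N < ḡ_k` after dividing by `k`.
-/

noncomputable def symmTridiag (n : ℕ) : Matrix (Fin n) (Fin n) ℝ :=
  of fun i j => if i = j then 1 else if (j : ℕ) = i + 1 ∨ (i : ℕ) = j + 1 then -(1 / 2) else 0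

lemma symmTridiag_mulVec_shift {n : ℕ} (W : ℕ → ℝ) (h0 : W 0 = 0) (hn : W (n + 1) = 0)
    (i : Fin n) :
    (symmTridiag n *ᵥ fun j => W (j + 1)) i = W (i + 1) - (W i + W (i + 2)) / 2 := by
  set f : ℕ → ℝ := fun b =>
    ((if b = i + 1 then 1 else 0) - (if b = i + 2 then 1 / 2 else 0) -
      (if b = i then 1 / 2 else 0)) * W b with hf
  have hentry : ∀ j : Fin n, symmTridiag n i j * W (j + 1) = f (j + 1) := by
    intro j
    simp only [symmTridiag, of_apply, hf, Fin.ext_iff]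
    split_ifs <;> first | omega | ring
  calc (symmTridiag n *ᵥ fun j => W (j + 1)) i
      = ∑ j ∈ range n, f (j + 1) := by
        simp only [mulVec, dotProduct, hentry]
        exact Fin.sum_univ_eq_sum_range (fun j => f (j + 1)) n
    _ = ∑ b ∈ range (n + 2), f b := by
        rw [sum_range_succ, sum_range_succ']
        simp [hf, h0, hn]
    _ = W (i + 1) - (W i + W (i + 2)) / 2 := by
        simp only [hf, sub_mul, ite_mul, one_mul, zero_mul, sum_sub_distrib, sum_ite_eq',
          mem_range]
        rw [if_pos (by omega), if_pos (by omega), if_pos (by omega)]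
        ring

lemma eq_zero_of_sub_midpoint_eq_zero {n : ℕ} (W : ℕ → ℝ) (h0 : W 0 = 0) (hn : W (n + 1) = 0)
    (hW : ∀ i < n, W (i + 1) - (W i + W (i + 2)) / 2 = 0) {k : ℕ} (hk : k ≤ n + 1) :
    W k = 0 := by
  have hlin : ∀ k ≤ n, W k = k * W 1 ∧ W (k + 1) = (k + 1) * W 1 := by
    intro k hk
    induction k with
    | zero => simp [h0]
    | succ k ih =>
      obtain ⟨hk₀, hk₁⟩ := ih (by omega)
      have := hW k (by omega)
      refine ⟨by rw [hk₁]; push_cast; ring, ?_⟩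
      push_cast
      linear_combination (-2) * this + 2 * hk₁ - hk₀
  have hW1 : W 1 = 0 := by
    have h := (hlin n le_rfl).2
    rw [hn, eq_comm, mul_eq_zero] at h
    exact h.resolve_left (by positivity)
  rcases hk.lt_or_eq with hk | rfl
  · rw [(hlin k (by omega)).1, hW1, mul_zero]
  · exact hn

lemma symmTridiag_mulVec_eq_zero {n : ℕ} {x : Fin n → ℝ} (hx : symmTridiag n *ᵥ x = 0) :
    x = 0 := by
  set W : ℕ → ℝ := fun k => if h : k ≠ 0 ∧ k - 1 < n then x ⟨k - 1, h.2⟩ else 0 with hW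
  have hWx : (fun j : Fin n => W (j + 1)) = x := by
    funext j
    simp [hW]
  have h0 : W 0 = 0 := by simp [hW]
  have hn : W (n + 1) = 0 := by simp [hW]
  funext j
  rw [← hWx]
  refine eq_zero_of_sub_midpoint_eq_zero W h0 hn (fun i hi => ?_) (by omega)
  rw [← symmTridiag_mulVec_shift W h0 hn ⟨i, hi⟩, hWx, hx, Pi.zero_apply]

lemma symmTridiag_mulVec_injective (n : ℕ) : Function.Injective (symmTridiag n).mulVec :=
  fun x y hxy => sub_eq_zero.mp <| symmTridiag_mulVec_eq_zero <| by
    rw [mulVec_sub, hxy, sub_self]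

lemma symmTridiag_inv_mulVec {n : ℕ} {v w : Fin n → ℝ} (h : symmTridiag n *ᵥ v = w) :
    (symmTridiag n)⁻¹ *ᵥ w = v := by
  have hdet : IsUnit (symmTridiag n).det := (isUnit_iff_isUnit_det _).mp <|
    mulVec_injective_iff_isUnit.mp (symmTridiag_mulVec_injective n)
  rw [← h, mulVec_mulVec, nonsing_inv_mul _ hdet, one_mulVec]

noncomputable def centeredPartialSum (g : ℕ → ℝ) (c : ℝ) (k : ℕ) : ℝ :=
  (∑ j ∈ range k, g j) - k * c

section centeredPartialSum

variable (g : ℕ → ℝ) (c : ℝ)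

@[simp]
lemma centeredPartialSum_zero : centeredPartialSum g c 0 = 0 := by
  simp [centeredPartialSum]

lemma centeredPartialSum_succ (k : ℕ) :
    centeredPartialSum g c (k + 1) = centeredPartialSum g c k + (g k - c) := by
  simp only [centeredPartialSum, sum_range_succ, Nat.cast_succ]
  ring

lemma centeredPartialSum_mean {N : ℕ} (hN : N ≠ 0) :
    centeredPartialSum g ((∑ j ∈ range N, g j) / N) N = 0 := by
  have : (N : ℝ) ≠ 0 := by exact_mod_cast hN
  simp only [centeredPartialSum]
  field_simp
  ring

lemma centeredPartialSum_pos_iff {k : ℕ} (hk : 0 < k) :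
    0 < centeredPartialSum g c k ↔ c < (∑ j ∈ range k, g j) / k := by
  rw [centeredPartialSum, sub_pos, lt_div_iff₀ (by exact_mod_cast hk), mul_comm]

end centeredPartialSum

/-- Symmetric collisions: with `R` the `(N−1)×(N−1)` tridiagonal matrix with `1` on the
diagonal and `−1/2` on the super- and sub-diagonals, and `μ_k = g_{k+1} − g_k`
(here `g : ℕ → ℝ`, `0`-indexed, so `g 0, …, g (N-1)` are the `N` drifts and
`ḡ_k = (g 0 + ⋯ + g (k-1))/k`), one has
`−R⁻¹μ = 2 (g₁ − ḡ_N, g₁+g₂ − 2ḡ_N, …, g₁+⋯+g_{N−1} − (N−1)ḡ_N)ᵀ`; consequently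
`−R⁻¹μ > 0` componentwise iff `ḡ_k > ḡ_N` for all `k = 1, …, N−1`. -/
theorem stmt_15 (N : ℕ) (hN : 2 ≤ N) (g : ℕ → ℝ)
    (R : Matrix (Fin (N - 1)) (Fin (N - 1)) ℝ)
    (hR : ∀ i j : Fin (N - 1), R i j =
      if i = j then 1 else if (j : ℕ) = i + 1 ∨ (i : ℕ) = j + 1 then -(1 / 2) else 0)
    (μ : Fin (N - 1) → ℝ) (hμ : ∀ i : Fin (N - 1), μ i = g (i + 1) - g i)
    (gbar : ℕ → ℝ) (hgbar : ∀ k : ℕ, gbar k = (∑ j ∈ range k, g j) / k) :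
    (∀ i : Fin (N - 1),
      (-(R⁻¹ *ᵥ μ)) i = 2 * ((∑ j ∈ range (i + 1), g j) - (i + 1) * gbar N)) ∧
    ((∀ i : Fin (N - 1), 0 < (-(R⁻¹ *ᵥ μ)) i) ↔
      ∀ k : ℕ, 1 ≤ k → k ≤ N - 1 → gbar N < gbar k) := by
  obtain rfl : R = symmTridiag (N - 1) := by
    ext i j
    rw [hR]
    rfl
  set W : ℕ → ℝ := fun k => 2 * centeredPartialSum g (gbar N) k with hW
  have hW0 : W 0 = 0 := by simp [hW]
  have hWN : W (N - 1 + 1) = 0 := by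
    simp [hW, Nat.sub_add_cancel (by omega : 1 ≤ N), hgbar N,
      centeredPartialSum_mean g (by omega : N ≠ 0)]
  have hsol : -((symmTridiag (N - 1))⁻¹ *ᵥ μ) = fun i : Fin (N - 1) => W (i + 1) := by
    rw [← mulVec_neg, symmTridiag_inv_mulVec]
    funext i
    rw [symmTridiag_mulVec_shift W hW0 hWN, Pi.neg_apply, hμ]
    simp only [hW, centeredPartialSum_succ]
    ring
  have hpos : ∀ k, 1 ≤ k → (0 < W k ↔ gbar N < gbar k) := fun k hk => by
    rw [hgbar k, ← centeredPartialSum_pos_iff g _ hk, hW]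
    exact mul_pos_iff_of_pos_left two_pos
  rw [hsol]
  refine ⟨fun i => by simp [hW, centeredPartialSum], ⟨fun h k hk hkN => ?_, fun h i => ?_⟩⟩
  · obtain ⟨i, rfl⟩ := Nat.exists_eq_add_of_le' hk
    exact (hpos _ hk).mp (h ⟨i, by omega⟩)
  · exact (hpos _ (by omega)).mpr (h _ (by omega) (by omega))
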